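/- For the standard cube I^n with the Cartan–Serre coproduct, the k-fold iterated coproduct of the top face I^n equals the signed sum over all sequences of faces F_1|...|F_k satisfying min F_1 = 0^n, max F_k = 1^n, and max F_i = min F_{i+1} for 1 ≤ i ≤ k−1; the sign of each term is the sign of the permutation of {1,...,n} obtained by concatenating, in order, the lists of positions at which I appears in F_1, F_2, ..., F_k. -/

import Mathlib

/-- The three possible entries of a face of the cube `Iⁿ`: `0`, `1`, or the free
coordinate `I`. A face of `Iⁿ` is a length-`n` list in `{0, 1, I}`. -/
inductive CubeSym : Type
  | zero : CubeSym
  | one : CubeSym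
  | seg : CubeSym
deriving DecidableEq

/-- The degree of a face: the number of `I`'s. -/
def faceDeg (F : List CubeSym) : ℕ := F.count CubeSym.seg

/-- `min F`: replace every `I` by `0`. -/
def faceMin (F : List CubeSym) : List CubeSym :=
  F.map fun s => if s = CubeSym.seg then CubeSym.zero else s

/-- `max F`: replace every `I` by `1`. -/
def faceMax (F : List CubeSym) : List CubeSym :=
  F.map fun s => if s = CubeSym.seg then CubeSym.one else s

/-- The (ordered) list of positions at which `I` occurs in a face, starting at index `i`. -/
def segPositions : List CubeSym → ℕ → List ℕ
  | [], _ => []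
  | (a :: t), i =>
      if a = CubeSym.seg then i :: segPositions t (i + 1) else segPositions t (i + 1)

/-- The number of inversions of a list of (distinct) naturals; the sign of the associated
permutation is `(−1)` to this count. -/
def invCount : List ℕ → ℕ
  | [] => 0
  | a :: t => t.countP (fun b => decide (b < a)) + invCount t

/-- The Cartan–Serre coproduct on cubical chains of the cube, on faces, defined on the
`1`-cube by `Δ0 = 0⊗0`, `Δ1 = 1⊗1`, `ΔI = 0⊗I + I⊗1` and extended to longer strings by
the Koszul sign rule. -/
noncomputable def csCop : List CubeSym → ((List CubeSym × List CubeSym) →₀ ℤ)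
  | [] => Finsupp.single ([], []) 1
  | (CubeSym.zero :: t) =>
      (csCop t).sum fun p c => Finsupp.single (CubeSym.zero :: p.1, CubeSym.zero :: p.2) c
  | (CubeSym.one :: t) =>
      (csCop t).sum fun p c => Finsupp.single (CubeSym.one :: p.1, CubeSym.one :: p.2) c
  | (CubeSym.seg :: t) =>
      (csCop t).sum fun p c =>
        ((-1 : ℤ) ^ faceDeg p.1 * c) •
            Finsupp.single (CubeSym.zero :: p.1, CubeSym.seg :: p.2) (1 : ℤ) +
          c • Finsupp.single (CubeSym.seg :: p.1, CubeSym.one :: p.2) (1 : ℤ)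

/-- The `(k+1)`-fold iterated coproduct (so `csIter 0 F = F`), landing in the free abelian
group on `(k+1)`-tuples of faces; iteration on the last tensor factor (the coproduct is
coassociative, so any order of iteration agrees). -/
noncomputable def csIter : ℕ → List CubeSym → (List (List CubeSym) →₀ ℤ)
  | 0, F => Finsupp.single [F] 1
  | (k + 1), F =>
      (csCop F).sum fun p c =>
        c • ((csIter k p.2).sum fun L cc => Finsupp.single (p.1 :: L) cc)

/-!
For an arbitrary face `F`, the coefficient of `A ⊗ B` in `Δ F` is nonzero exactly when
`min A = min F`, `max A = min B` and `max B = max F`, and it is then `(-1)` to the number of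
inversions of `pos A ++ pos B`, where `pos` lists the `I`-positions: this is a coordinatewise
induction, the Koszul sign `(-1)^{deg A}` of `0 ⊗ I` counting the inversions of the new
position `0` placed behind the `I`-positions of `A`.

Since `min B` and `max B` determine `B`, iterating on the last factor a sequence `A | F₂ | …`
receives a contribution from a single `B`, and by induction the `I`-positions of `F₂, …`
concatenate to a permutation of the increasing list `pos B`. Inversions against a sorted list
only depend on its content, so the inversion counts of the two factors add up.
-/

def crossInvCount (X Y : List ℕ) : ℕ := (X.map fun a => Y.countP (· < a)).sum

lemma invCount_append (X Y : List ℕ) :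
    invCount (X ++ Y) = invCount X + invCount Y + crossInvCount X Y := by
  induction X with
  | nil => simp [crossInvCount, invCount]
  | cons a X ih =>
    simp only [List.cons_append, invCount, List.countP_append, ih, crossInvCount, List.map_cons,
      List.sum_cons]
    omega

lemma crossInvCount_congr_right (X : List ℕ) {Y Y' : List ℕ} (h : Y.Perm Y') :
    crossInvCount X Y = crossInvCount X Y' := by
  simp [crossInvCount, h.countP_eq]

lemma invCount_eq_zero_of_sorted {l : List ℕ} (h : l.Pairwise (· < ·)) : invCount l = 0 := by
  induction h with
  | nil => rfl
  | cons hlt _ ih =>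
    simp only [invCount, ih, add_zero, List.countP_eq_zero, decide_eq_true_eq, not_lt]
    exact fun b hb => (hlt b hb).le

lemma invCount_append_of_perm_of_sorted {X Y Z : List ℕ} (hYZ : Y.Perm Z)
    (hZ : Z.Pairwise (· < ·)) : invCount (X ++ Z) + invCount Y = invCount (X ++ Y) := by
  rw [invCount_append, invCount_append, invCount_eq_zero_of_sorted hZ,
    crossInvCount_congr_right X hYZ]
  omega

lemma invCount_map_succ (l : List ℕ) : invCount (l.map (· + 1)) = invCount l := by
  induction l with
  | nil => rfl
  | cons a t ih => simp [invCount, ih, List.countP_map, Function.comp_def]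

lemma invCount_zero_cons (l : List ℕ) : invCount (0 :: l) = invCount l := by
  simp [invCount]

lemma invCount_map_succ_append_zero_cons (X Y : List ℕ) :
    invCount (X.map (· + 1) ++ 0 :: Y.map (· + 1)) = X.length + invCount (X ++ Y) := by
  induction X with
  | nil => simp [invCount_zero_cons, invCount_map_succ]
  | cons a X ih =>
    simp only [List.map_cons, List.cons_append, invCount, Order.lt_add_one_iff, List.countP_append,
      List.countP_map, Function.comp_def, Order.add_one_le_iff, zero_le, decide_true,
      List.countP_cons_of_pos, ih, List.length_cons]
    omega

namespace Finsupp

variable {α β M : Type*} [AddCommMonoid M]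

lemma sum_single_apply_of_injective (f : α →₀ M) {g : α → β} (hg : g.Injective)
    {h : α → M → M} (h0 : ∀ a, h a 0 = 0) (a : α) :
    (f.sum fun p c => single (g p) (h p c)) (g a) = h a (f a) := by
  classical
  rw [sum_apply, sum, Finset.sum_eq_single a]
  · rw [single_eq_same]
  · intro p _ hp
    rw [single_eq_of_ne (hg.ne hp).symm]
  · intro ha
    rw [notMem_support_iff.1 ha, h0, single_eq_same]

lemma sum_single_apply_of_notMem_range (f : α →₀ M) {g : α → β} {h : α → M → M}
    {b : β} (hb : b ∉ Set.range g) : (f.sum fun p c => single (g p) (h p c)) b = 0 := by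
  rw [sum_apply]
  exact Finset.sum_eq_zero fun p _ => single_eq_of_ne fun hp => hb ⟨p, hp.symm⟩

end Finsupp

namespace CubeSym

open List Finsupp

lemma segPositions_eq_map_add (F : List CubeSym) (i : ℕ) :
    segPositions F i = (segPositions F 0).map (· + i) := by
  induction F generalizing i with
  | nil => rfl
  | cons a t ih =>
    by_cases h : a = seg <;>
      simp [segPositions, h, ih (i + 1), ih 1, Function.comp_def, Nat.add_assoc, Nat.add_comm 1 i]

abbrev facePos (F : List CubeSym) : List ℕ := segPositions F 0

lemma facePos_cons_of_ne {a : CubeSym} (ha : a ≠ seg) (t : List CubeSym) :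
    facePos (a :: t) = (facePos t).map (· + 1) := by
  simp [segPositions, ha, segPositions_eq_map_add t 1]

lemma facePos_cons_seg (t : List CubeSym) :
    facePos (seg :: t) = 0 :: (facePos t).map (· + 1) := by
  simp [segPositions, segPositions_eq_map_add t 1]

lemma faceDeg_eq_length_facePos (F : List CubeSym) : faceDeg F = (facePos F).length := by
  induction F with
  | nil => rfl
  | cons a t ih =>
    by_cases h : a = seg
    · simp [faceDeg, h, facePos_cons_seg, ← ih]
    · simp [faceDeg, h, facePos_cons_of_ne h, ← ih]

lemma facePos_sorted (F : List CubeSym) : (facePos F).Pairwise (· < ·) := by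
  induction F with
  | nil => exact List.Pairwise.nil
  | cons a t ih =>
    have hmap : ((facePos t).map (· + 1)).Pairwise (· < ·) :=
      List.pairwise_map.2 (ih.imp fun h => Nat.succ_lt_succ h)
    by_cases h : a = seg
    · subst h
      rw [facePos_cons_seg]
      exact List.pairwise_cons.2 ⟨by simp, hmap⟩
    · rwa [facePos_cons_of_ne h]

lemma csCop_seg_cons (t : List CubeSym) :
    csCop (seg :: t) =
      ((csCop t).sum fun p c => single (zero :: p.1, seg :: p.2) ((-1) ^ faceDeg p.1 * c)) +
        (csCop t).sum fun p c => single (seg :: p.1, one :: p.2) c := by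
  simp only [csCop, smul_single_one]
  exact sum_add

lemma consPair_injective (a b : CubeSym) :
    (fun p : List CubeSym × List CubeSym => (a :: p.1, b :: p.2)).Injective :=
  fun p q h => by simpa [Prod.ext_iff] using h

lemma csCop_cons_of_ne_seg {a : CubeSym} (ha : a ≠ seg) (t : List CubeSym) :
    csCop (a :: t) = (csCop t).sum fun p c => single (a :: p.1, a :: p.2) c := by
  cases a <;> first | rfl | contradiction

lemma csCop_cons_apply_of_ne_seg {a : CubeSym} (ha : a ≠ seg) (t : List CubeSym)
    (b c : CubeSym) (A B : List CubeSym) :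
    csCop (a :: t) (b :: A, c :: B) = if b = a ∧ c = a then csCop t (A, B) else 0 := by
  rw [csCop_cons_of_ne_seg ha]
  split_ifs with h
  · obtain ⟨rfl, rfl⟩ := h
    exact sum_single_apply_of_injective (h := fun _ c => c) _ (consPair_injective _ _)
      (fun _ => rfl) (A, B)
  · refine sum_single_apply_of_notMem_range _ ?_
    rintro ⟨p, hp⟩
    simp only [Prod.mk.injEq, List.cons.injEq] at hp
    exact h ⟨hp.1.1.symm, hp.2.1.symm⟩

lemma csCop_seg_cons_apply (t : List CubeSym) (b c : CubeSym) (A B : List CubeSym) :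
    csCop (seg :: t) (b :: A, c :: B) =
      if b = zero ∧ c = seg then (-1) ^ faceDeg A * csCop t (A, B)
      else if b = seg ∧ c = one then csCop t (A, B) else 0 := by
  rw [csCop_seg_cons, Finsupp.add_apply]
  split_ifs with h₁ h₂
  · obtain ⟨rfl, rfl⟩ := h₁
    rw [sum_single_apply_of_injective (h := fun p c => (-1) ^ faceDeg p.1 * c) _
      (consPair_injective _ _) (fun _ => mul_zero _) (A, B),
      sum_single_apply_of_notMem_range _ (by simp), add_zero]
  · obtain ⟨rfl, rfl⟩ := h₂
    rw [sum_single_apply_of_notMem_range _ (by simp), zero_add,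
      sum_single_apply_of_injective (h := fun _ c => c) _ (consPair_injective _ _)
        (fun _ => rfl) (A, B)]
  · rw [sum_single_apply_of_notMem_range _ ?_, sum_single_apply_of_notMem_range _ ?_, add_zero]
    · rintro ⟨p, hp⟩
      simp only [Prod.mk.injEq, List.cons.injEq] at hp
      exact h₂ ⟨hp.1.1.symm, hp.2.1.symm⟩
    · rintro ⟨p, hp⟩
      simp only [Prod.mk.injEq, List.cons.injEq] at hp
      exact h₁ ⟨hp.1.1.symm, hp.2.1.symm⟩

lemma csCop_cons_apply_nil_left (s : CubeSym) (t B : List CubeSym) :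
    csCop (s :: t) ([], B) = 0 := by
  by_cases hs : s = seg
  · subst hs
    rw [csCop_seg_cons, Finsupp.add_apply, sum_single_apply_of_notMem_range _ (by simp),
      sum_single_apply_of_notMem_range _ (by simp), add_zero]
  · rw [csCop_cons_of_ne_seg hs, sum_single_apply_of_notMem_range _ (by simp)]

lemma csCop_cons_apply_nil_right (s : CubeSym) (t A : List CubeSym) :
    csCop (s :: t) (A, []) = 0 := by
  by_cases hs : s = seg
  · subst hs
    rw [csCop_seg_cons, Finsupp.add_apply, sum_single_apply_of_notMem_range _ (by simp),
      sum_single_apply_of_notMem_range _ (by simp), add_zero]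
  · rw [csCop_cons_of_ne_seg hs, sum_single_apply_of_notMem_range _ (by simp)]

def IsCopTerm (F A B : List CubeSym) : Prop :=
  faceMin A = faceMin F ∧ faceMax B = faceMax F ∧ faceMax A = faceMin B

instance (F A B : List CubeSym) : Decidable (IsCopTerm F A B) := by
  unfold IsCopTerm; infer_instance

lemma isCopTerm_cons (s a b : CubeSym) (t A B : List CubeSym) :
    IsCopTerm (s :: t) (a :: A) (b :: B) ↔ IsCopTerm [s] [a] [b] ∧ IsCopTerm t A B := by
  simp only [IsCopTerm, faceMin, faceMax, List.map_cons, List.map_nil, List.cons.injEq,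
    and_true]
  tauto

lemma csCop_apply (F A B : List CubeSym) :
    csCop F (A, B) =
      if IsCopTerm F A B then (-1) ^ invCount (facePos A ++ facePos B) else 0 := by
  induction F generalizing A B with
  | nil =>
    rcases A with _ | ⟨a, A⟩ <;> rcases B with _ | ⟨b, B⟩ <;>
      simp [csCop, IsCopTerm, faceMin, faceMax, segPositions, invCount]
  | cons s t ih =>
    rcases A with _ | ⟨a, A⟩
    · simp [csCop_cons_apply_nil_left, IsCopTerm, faceMin]
    rcases B with _ | ⟨b, B⟩
    · simp [csCop_cons_apply_nil_right, IsCopTerm, faceMax]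
    cases s <;> cases a <;> cases b <;>
      simp +decide [csCop_cons_apply_of_ne_seg, csCop_seg_cons_apply, ih, isCopTerm_cons,
        facePos_cons_of_ne, facePos_cons_seg, invCount_map_succ, ← List.map_append,
        invCount_map_succ_append_zero_cons, invCount_zero_cons, faceDeg_eq_length_facePos, pow_add,
        mul_ite]

lemma eq_of_faceMin_eq_of_faceMax_eq {F G : List CubeSym} (hmin : faceMin F = faceMin G)
    (hmax : faceMax F = faceMax G) : F = G := by
  induction F generalizing G with
  | nil => simpa [faceMin] using hmin.symm
  | cons a F ih =>
    rcases G with _ | ⟨b, G⟩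
    · simp [faceMin] at hmin
    simp only [faceMin, faceMax, map_cons, cons.injEq] at hmin hmax
    rw [ih hmin.2 hmax.2]
    cases a <;> cases b <;> simp_all

/-- For `max A = min B`, the face with minimum `min A` and maximum `max B`. -/
def faceJoin (A B : List CubeSym) : List CubeSym :=
  zipWith (fun a b => if a = b then a else seg) A B

section faceJoin

variable {A B : List CubeSym}

lemma faceMin_faceJoin (h : faceMax A = faceMin B) : faceMin (faceJoin A B) = faceMin A := by
  induction A generalizing B with
  | nil => rfl
  | cons a A ih =>
    rcases B with _ | ⟨b, B⟩
    · simp [faceMin, faceMax] at h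
    simp only [faceMin, faceMax, map_cons, cons.injEq] at h
    simp only [faceJoin, zipWith_cons_cons, faceMin, map_cons] at ih ⊢
    rw [ih h.2]
    cases a <;> cases b <;> simp_all

lemma faceMax_faceJoin (h : faceMax A = faceMin B) : faceMax (faceJoin A B) = faceMax B := by
  induction A generalizing B with
  | nil => rcases B with _ | ⟨b, B⟩ <;> simp_all [faceMin, faceMax, faceJoin]
  | cons a A ih =>
    rcases B with _ | ⟨b, B⟩
    · simp [faceMin, faceMax] at h
    simp only [faceMin, faceMax, map_cons, cons.injEq] at h
    simp only [faceJoin, zipWith_cons_cons, faceMax, map_cons] at ih ⊢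
    rw [ih h.2]
    cases a <;> cases b <;> simp_all

lemma facePos_append_perm_faceJoin (h : faceMax A = faceMin B) :
    (facePos A ++ facePos B).Perm (facePos (faceJoin A B)) := by
  induction A generalizing B with
  | nil => rcases B with _ | ⟨b, B⟩ <;> simp_all [faceMin, faceMax, faceJoin, segPositions]
  | cons a A ih =>
    rcases B with _ | ⟨b, B⟩
    · simp [faceMin, faceMax] at h
    simp only [faceMin, faceMax, map_cons, cons.injEq] at h
    have ih' := (ih h.2).map (· + 1)
    rw [map_append] at ih'
    have hjoin : faceJoin (a :: A) (b :: B) = (if a = b then a else seg) :: faceJoin A B := rfl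
    rw [hjoin]
    cases a <;> cases b <;> simp_all [facePos_cons_of_ne, facePos_cons_seg]
    · exact perm_middle.trans (ih'.cons 0)

end faceJoin

abbrev Abuts (F G : List CubeSym) : Prop := faceMax F = faceMin G

lemma exists_flatten_facePos_perm (A : List CubeSym) (L : List (List CubeSym))
    (h : IsChain Abuts (A :: L)) :
    ∃ G, faceMin G = faceMin A ∧ faceMax G = faceMax ((A :: L).getLast (cons_ne_nil _ _)) ∧
      (((A :: L).map facePos).flatten).Perm (facePos G) := by
  induction L generalizing A with
  | nil => exact ⟨A, rfl, rfl, by simp⟩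
  | cons C L ih =>
    obtain ⟨hAC, hC⟩ := isChain_cons_cons.1 h
    obtain ⟨G, hmin, hmax, hperm⟩ := ih C hC
    have hAG : faceMax A = faceMin G := hAC.trans hmin.symm
    refine ⟨faceJoin A G, faceMin_faceJoin hAG, (faceMax_faceJoin hAG).trans hmax, ?_⟩
    rw [map_cons, flatten_cons]
    exact (hperm.append_left _).trans (facePos_append_perm_faceJoin hAG)

def IsIterTerm (F : List CubeSym) (k : ℕ) (L : List (List CubeSym)) : Prop :=
  L.length = k + 1 ∧ (∀ G ∈ L.head?, faceMin G = faceMin F) ∧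
    (∀ G ∈ L.getLast?, faceMax G = faceMax F) ∧ IsChain Abuts L

instance (F : List CubeSym) (k : ℕ) (L : List (List CubeSym)) :
    Decidable (IsIterTerm F k L) := by
  unfold IsIterTerm; infer_instance

lemma IsIterTerm.flatten_facePos_perm {F : List CubeSym} {k : ℕ} {L : List (List CubeSym)}
    (h : IsIterTerm F k L) : ((L.map facePos).flatten).Perm (facePos F) := by
  obtain ⟨hlen, hhead, hlast, hchain⟩ := h
  rcases L with _ | ⟨A, L⟩
  · simp at hlen
  obtain ⟨G, hmin, hmax, hperm⟩ := exists_flatten_facePos_perm A L hchain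
  rwa [← eq_of_faceMin_eq_of_faceMax_eq (hmin.trans (hhead A rfl))
    (hmax.trans (hlast _ (getLast_mem_getLast? _)))]

lemma IsCopTerm.unique {F A B B' : List CubeSym} (h : IsCopTerm F A B) (h' : IsCopTerm F A B') :
    B = B' :=
  eq_of_faceMin_eq_of_faceMax_eq (h.2.2.symm.trans h'.2.2) (h.2.1.trans h'.2.1.symm)

lemma isIterTerm_cons_of_isCopTerm {F A B : List CubeSym} {k : ℕ} {L : List (List CubeSym)}
    (hcop : IsCopTerm F A B) (hiter : IsIterTerm B k L) : IsIterTerm F (k + 1) (A :: L) := by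
  obtain ⟨hlen, hhead, hlast, hchain⟩ := hiter
  rcases L with _ | ⟨C, L⟩
  · simp at hlen
  refine ⟨by simpa using hlen, by simpa using hcop.1, fun G hG => ?_,
    isChain_cons_cons.2 ⟨hcop.2.2.trans (hhead C rfl).symm, hchain⟩⟩
  rw [getLast?_cons_cons] at hG
  exact (hlast G hG).trans hcop.2.1

lemma IsIterTerm.exists_isCopTerm {F A : List CubeSym} {k : ℕ} {L : List (List CubeSym)}
    (h : IsIterTerm F (k + 1) (A :: L)) : ∃ B, IsCopTerm F A B ∧ IsIterTerm B k L := by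
  obtain ⟨hlen, hhead, hlast, hchain⟩ := h
  rcases L with _ | ⟨C, L⟩
  · simp at hlen
  obtain ⟨hAC, hC⟩ := isChain_cons_cons.1 hchain
  obtain ⟨G, hmin, hmax, -⟩ := exists_flatten_facePos_perm C L hC
  have hGF : faceMax G = faceMax F := by
    rw [hmax, ← hlast ((C :: L).getLast (cons_ne_nil _ _))
      (by rw [getLast?_cons_cons]; exact getLast_mem_getLast? _)]
  refine ⟨G, ⟨hhead A rfl, hGF, hAC.trans hmin.symm⟩, by simpa using hlen,
    by simpa using hmin.symm, fun H hH => ?_, hC⟩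
  rw [getLast?_eq_some_getLast (cons_ne_nil _ _), Option.mem_some_iff] at hH
  rw [← hH, ← hmax, hGF]

lemma isIterTerm_zero_iff {F : List CubeSym} {L : List (List CubeSym)} :
    IsIterTerm F 0 L ↔ L = [F] := by
  constructor
  · rintro ⟨hlen, hhead, hlast, -⟩
    obtain ⟨A, rfl⟩ := length_eq_one_iff.1 hlen
    rw [eq_of_faceMin_eq_of_faceMax_eq (hhead A rfl) (hlast A rfl)]
  · rintro rfl
    exact ⟨rfl, by simp, by simp, isChain_singleton F⟩

lemma IsIterTerm.length_eq {F : List CubeSym} {k : ℕ} {L : List (List CubeSym)}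
    (h : IsIterTerm F k L) : ∀ G ∈ L, G.length = F.length := by
  refine h.2.2.2.induction _ L (fun G H hGH hG => ?_) fun hL => ?_
  · rw [← hG]
    simpa [faceMin, faceMax] using (congrArg length hGH).symm
  · simpa [faceMin] using congrArg length (h.2.1 _ (head_mem_head? hL))

lemma csIter_succ_apply_nil (k : ℕ) (F : List CubeSym) : csIter (k + 1) F [] = 0 := by
  rw [csIter, Finsupp.sum_apply, Finsupp.sum]
  refine Finset.sum_eq_zero fun p _ => ?_
  rw [Finsupp.smul_apply, sum_single_apply_of_notMem_range _ (by simp), smul_zero]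

lemma csIter_succ_apply_cons (k : ℕ) (F A : List CubeSym) (L : List (List CubeSym)) :
    csIter (k + 1) F (A :: L) =
      (csCop F).sum fun p c => if p.1 = A then c * csIter k p.2 L else 0 := by
  rw [csIter, Finsupp.sum_apply]
  refine Finsupp.sum_congr fun p _ => ?_
  rw [Finsupp.smul_apply, smul_eq_mul]
  split_ifs with h
  · rw [← h, sum_single_apply_of_injective (h := fun _ c => c) _ cons_injective (fun _ => rfl)]
  · rw [sum_single_apply_of_notMem_range _ (by simpa [eq_comm] using h), mul_zero]

theorem csIter_apply (k : ℕ) (F : List CubeSym) (L : List (List CubeSym)) :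
    csIter k F L =
      if IsIterTerm F k L then (-1) ^ invCount ((L.map facePos).flatten) else 0 := by
  induction k generalizing F L with
  | zero =>
    rw [csIter, Finsupp.single_apply, if_congr (eq_comm.trans isIterTerm_zero_iff.symm) rfl rfl]
    split_ifs with h
    · simp [isIterTerm_zero_iff.1 h, invCount_eq_zero_of_sorted (facePos_sorted F)]
    · rfl
  | succ k ih =>
    rcases L with _ | ⟨A, L⟩
    · rw [csIter_succ_apply_nil, if_neg fun h => by simpa using h.1]
    rw [csIter_succ_apply_cons, Finsupp.sum]
    split_ifs with h
    · obtain ⟨B, hcop, hiter⟩ := h.exists_isCopTerm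
      rw [Finset.sum_eq_single (A, B)]
      · rw [if_pos rfl, csCop_apply, ih, if_pos hcop, if_pos hiter, ← pow_add,
          invCount_append_of_perm_of_sorted hiter.flatten_facePos_perm (facePos_sorted B)]
        simp
      · rintro ⟨A', B'⟩ hp hne
        refine if_neg fun hA => hne ?_
        rw [Finsupp.mem_support_iff, csCop_apply] at hp
        obtain rfl : A' = A := hA
        rw [(of_not_not fun hc => hp (if_neg hc)).unique hcop]
      · intro hp
        rw [Finsupp.notMem_support_iff.1 hp, if_pos rfl, zero_mul]
    · refine Finset.sum_eq_zero fun ⟨A', B⟩ _ => ?_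
      refine ite_eq_right_iff.2 fun hA => ?_
      obtain rfl : A' = A := hA
      rw [csCop_apply, ih]
      split_ifs with hcop hiter
      · exact absurd (isIterTerm_cons_of_isCopTerm hcop hiter) h
      all_goals simp

end CubeSym

/-- The `(k+1)`-fold iterated Cartan–Serre coproduct of the top face
`Iⁿ` is the signed sum of exactly those sequences of faces `F_1 | … | F_{k+1}` with
`min F_1 = 0ⁿ`, `max F_{k+1} = 1ⁿ` and `max F_i = min F_{i+1}`; the sign of the
coefficient of such a sequence is the sign of the permutation of `{0, …, n−1}` obtained
by concatenating the lists of `I`-positions of `F_1, F_2, …, F_{k+1}`. -/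
theorem csIter_top_face (n k : ℕ) (L : List (List CubeSym)) :
    (csIter k (List.replicate n CubeSym.seg)) L =
      if L.length = k + 1 ∧ (∀ F ∈ L, F.length = n) ∧
          (∀ F ∈ L.head?, faceMin F = List.replicate n CubeSym.zero) ∧
          (∀ F ∈ L.getLast?, faceMax F = List.replicate n CubeSym.one) ∧
          List.IsChain (fun F G => faceMax F = faceMin G) L then
        (-1 : ℤ) ^ invCount ((L.map fun F => segPositions F 0).flatten)
      else 0 := by
  have hmin : faceMin (List.replicate n CubeSym.seg) = List.replicate n CubeSym.zero := by
    simp [faceMin]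
  have hmax : faceMax (List.replicate n CubeSym.seg) = List.replicate n CubeSym.one := by
    simp [faceMax]
  rw [CubeSym.csIter_apply]
  refine if_congr ⟨fun h => ⟨h.1, fun G hG => ?_, ?_, ?_, h.2.2.2⟩,
    fun ⟨hlen, _, hhead, hlast, hchain⟩ => ⟨hlen, by rwa [hmin], by rwa [hmax], hchain⟩⟩
    rfl rfl
  · rw [h.length_eq G hG, List.length_replicate]
  · rw [← hmin]; exact h.2.1
  · rw [← hmax]; exact h.2.2.1
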